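/- Let k ∈ ℝ and W ⊂ ℝ⁴ the plane spanned (at a point with parameter v) by u₁ = (1,0,0,0) and u₂ = (0, k sinh v, 1, k cosh v). With J₁(x₁,x₂,x₃,x₄) = (x₃,x₄,x₁,x₂) and g₁ = diag(1,1,-1,-1), the tangential endomorphism P of J₁ on W satisfies P² = (1/(k²+1))·Id on W. -/

import Mathlib

/-!
The basis `u₁, u₂` of `W` is `g1`-orthogonal with `g1 u₁ u₁ = 1` and `g1 u₂ u₂ = -(k² + 1)`
(by `cosh² - sinh² = 1`), so the `g1`-orthogonal projection onto `W` is well defined and can be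
read off from the pairings with `u₁, u₂`. This gives `P u₁ = u₂ / (k² + 1)` and `P u₂ = u₁`,
hence `P² = 1 / (k² + 1)` on `W`.
-/

def J1 (v : Fin 4 → ℝ) : Fin 4 → ℝ := ![v 2, v 3, v 0, v 1]

def g1 (v w : Fin 4 → ℝ) : ℝ := v 0 * w 0 + v 1 * w 1 - v 2 * w 2 - v 3 * w 3

open Real

def u₁ : Fin 4 → ℝ := ![1, 0, 0, 0]

noncomputable def u₂ (k v : ℝ) : Fin 4 → ℝ := ![0, k * sinh v, 1, k * cosh v]

lemma g1_sub_left (x y w : Fin 4 → ℝ) : g1 (x - y) w = g1 x w - g1 y w := by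
  simp only [g1, Pi.sub_apply]
  ring

section Frame

variable (k v a b : ℝ)

lemma g1_comb_u₁ : g1 (a • u₁ + b • u₂ k v) u₁ = a := by
  simp [g1, u₁, u₂]

lemma g1_comb_u₂ : g1 (a • u₁ + b • u₂ k v) (u₂ k v) = -(k ^ 2 + 1) * b := by
  simp [g1, u₁, u₂]
  linear_combination (-b * k ^ 2) * cosh_sq v

lemma g1_J1_comb_u₁ : g1 (J1 (a • u₁ + b • u₂ k v)) u₁ = b := by
  simp [g1, J1, u₁, u₂]

lemma g1_J1_comb_u₂ : g1 (J1 (a • u₁ + b • u₂ k v)) (u₂ k v) = -a := by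
  simp [g1, J1, u₁, u₂]
  ring

end Frame

lemma apply_comb_of_orthogonal (k v : ℝ) (P : (Fin 4 → ℝ) → (Fin 4 → ℝ))
    (hPW : ∀ u ∈ Submodule.span ℝ {u₁, u₂ k v}, P u ∈ Submodule.span ℝ {u₁, u₂ k v})
    (horth : ∀ u ∈ Submodule.span ℝ {u₁, u₂ k v}, ∀ w ∈ Submodule.span ℝ {u₁, u₂ k v},
      g1 (J1 u - P u) w = 0)
    (a b : ℝ) :
    P (a • u₁ + b • u₂ k v) = b • u₁ + (a / (k ^ 2 + 1)) • u₂ k v := by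
  have hu : a • u₁ + b • u₂ k v ∈ Submodule.span ℝ {u₁, u₂ k v} :=
    Submodule.mem_span_pair.2 ⟨a, b, rfl⟩
  obtain ⟨a', b', hP⟩ := Submodule.mem_span_pair.1 (hPW _ hu)
  have h₁ := horth _ hu u₁ (Submodule.subset_span (by simp))
  have h₂ := horth _ hu (u₂ k v) (Submodule.subset_span (by simp))
  rw [g1_sub_left, ← hP, g1_J1_comb_u₁, g1_comb_u₁] at h₁
  rw [g1_sub_left, ← hP, g1_J1_comb_u₂, g1_comb_u₂] at h₂
  have hb' : b' = a / (k ^ 2 + 1) := by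
    field_simp
    linarith
  rw [← hP, hb', show a' = b by linarith]

theorem stmt_13 (k v : ℝ) (W : Submodule ℝ (Fin 4 → ℝ))
    (hW : W = Submodule.span ℝ
      {![1, 0, 0, 0], ![0, k * Real.sinh v, 1, k * Real.cosh v]})
    (P : (Fin 4 → ℝ) → (Fin 4 → ℝ))
    (hPW : ∀ u ∈ W, P u ∈ W)
    (horth : ∀ u ∈ W, ∀ w ∈ W, g1 (J1 u - P u) w = 0) :
    ∀ u ∈ W, P (P u) = (1 / (k ^ 2 + 1)) • u := by
  change W = Submodule.span ℝ {u₁, u₂ k v} at hW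
  subst hW
  intro u hu
  obtain ⟨a, b, rfl⟩ := Submodule.mem_span_pair.1 hu
  rw [apply_comb_of_orthogonal k v P hPW horth, apply_comb_of_orthogonal k v P hPW horth]
  module
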